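/- arXiv:1902.00291 — 2 statements merged into one kernel-verified Lean document; each statement's English description precedes it below -/
import Mathlib

section
/- Let C, R, Q > 0 and θ_a, θ₋, θ₊ be reals with θ_a - R·Q < θ₋ < θ₊ < θ_a. For β ∈ [0, θ_a - θ₊) define T_on(β) := C·R·ln((R·Q + θ₊ - θ_a + β)/(R·Q + θ₋ - θ_a + β)), T_off(β) := C·R·ln((θ_a - θ₋ - β)/(θ_a - θ₊ - β)), and the duty cycle η(β) := T_on(β)/(T_on(β) + T_off(β)). Then for every β with 0 < β < θ_a - θ₊ one has 0 < η(β) < η(0) < 1. Consequently, for any input power p > 0 the new steady-state average power p·η(β) is strictly smaller than the initial steady-state average power p·η(0), i.e., the steady-state reserve capacity p·(η(0) - η(β)) remaining after the demand response rebound is strictly positive. -/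
theorem tcl_duty_cycle_decrease_after_setpoint_shift
    (C R Q θa θm θp : ℝ) (hC : 0 < C) (hR : 0 < R) (hQ : 0 < Q)
    (hlow : θa - R * Q < θm) (hband : θm < θp) (hhigh : θp < θa)
    (Ton Toff η : ℝ → ℝ)
    (hTon : ∀ β : ℝ, Ton β = C * R * Real.log ((R * Q + θp - θa + β) / (R * Q + θm - θa + β)))
    (hToff : ∀ β : ℝ, Toff β = C * R * Real.log ((θa - θm - β) / (θa - θp - β)))
    (hη : ∀ β : ℝ, η β = Ton β / (Ton β + Toff β)) :
    ∀ β : ℝ, 0 < β → β < θa - θp →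
      (0 < η β ∧ η β < η 0 ∧ η 0 < 1) ∧
      ∀ p : ℝ, 0 < p → p * η β < p * η 0 ∧ 0 < p * (η 0 - η β) := by
  intro β hβ0 hβd
  have hCR : 0 < C * R := mul_pos hC hR
  have hb : 0 < R * Q + θm - θa := by linarith
  have hbβ : 0 < R * Q + θm - θa + β := by linarith
  have hdβ : 0 < θa - θp - β := by linarith
  have hd : 0 < θa - θp := by linarith
  -- Ton positivity
  have hTonβ : 0 < Ton β := by
    rw [hTon]
    apply mul_pos hCR
    apply Real.log_pos
    rw [lt_div_iff₀ hbβ]; linarith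
  have hTon0 : 0 < Ton 0 := by
    rw [hTon]
    apply mul_pos hCR
    apply Real.log_pos
    rw [lt_div_iff₀ (by linarith : (0:ℝ) < R * Q + θm - θa + 0)]; linarith
  -- Toff positivity
  have hToffβ : 0 < Toff β := by
    rw [hToff]
    apply mul_pos hCR
    apply Real.log_pos
    rw [lt_div_iff₀ hdβ]; linarith
  have hToff0 : 0 < Toff 0 := by
    rw [hToff]
    apply mul_pos hCR
    apply Real.log_pos
    rw [lt_div_iff₀ (by linarith : (0:ℝ) < θa - θp - 0)]; linarith
  -- Ton decreases
  have hTonlt : Ton β < Ton 0 := by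
    rw [hTon, hTon]
    apply mul_lt_mul_of_pos_left _ hCR
    apply Real.log_lt_log (div_pos (by linarith) hbβ)
    rw [div_lt_div_iff₀ hbβ (by linarith : (0:ℝ) < R * Q + θm - θa + 0)]
    nlinarith
  -- Toff increases
  have hTofflt : Toff 0 < Toff β := by
    rw [hToff, hToff]
    apply mul_lt_mul_of_pos_left _ hCR
    apply Real.log_lt_log (div_pos (by linarith) (by linarith : (0:ℝ) < θa - θp - 0))
    rw [div_lt_div_iff₀ (by linarith : (0:ℝ) < θa - θp - 0) hdβ]
    nlinarith
  have hsumβ : 0 < Ton β + Toff β := by linarith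
  have hsum0 : 0 < Ton 0 + Toff 0 := by linarith
  have hηβpos : 0 < η β := by
    rw [hη]; exact div_pos hTonβ hsumβ
  have hηlt : η β < η 0 := by
    rw [hη, hη, div_lt_div_iff₀ hsumβ hsum0]
    nlinarith
  have hη01 : η 0 < 1 := by
    rw [hη, div_lt_one hsum0]; linarith
  refine ⟨⟨hηβpos, hηlt, hη01⟩, ?_⟩
  intro p hp
  constructor
  · exact mul_lt_mul_of_pos_left hηlt hp
  · have : 0 < η 0 - η β := by linarith
    exact mul_pos hp this
end

section
/- Let C, R, Q > 0 and θ₋ < θ₊ be reals. For an ambient temperature x with θ₊ < x and x - R·Q < θ₋, define T_on(x) := C·R·ln((R·Q + θ₊ - x)/(R·Q + θ₋ - x)) and T_off(x) := C·R·ln((x - θ₋)/(x - θ₊)). Then for any two admissible ambient temperatures x₁ < x₂ (i.e., θ₊ < x₁ < x₂ and x₂ - R·Q < θ₋), one has T_on(x₂) > T_on(x₁), T_off(x₂) < T_off(x₁), and hence the duty cycle satisfies T_on(x₂)/(T_on(x₂) + T_off(x₂)) > T_on(x₁)/(T_on(x₁) + T_off(x₁)); that is, the steady-state duty cycle of a TCL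 is strictly increasing in the ambient temperature. -/
theorem tcl_duty_cycle_increasing_in_ambient_temperature
    (C R Q θm θp : ℝ) (hC : 0 < C) (hR : 0 < R) (hQ : 0 < Q) (hband : θm < θp)
    (Ton Toff : ℝ → ℝ)
    (hTon : ∀ x : ℝ, Ton x = C * R * Real.log ((R * Q + θp - x) / (R * Q + θm - x)))
    (hToff : ∀ x : ℝ, Toff x = C * R * Real.log ((x - θm) / (x - θp))) :
    ∀ x₁ x₂ : ℝ, θp < x₁ → x₁ < x₂ → x₂ - R * Q < θm →
      Ton x₁ < Ton x₂ ∧ Toff x₂ < Toff x₁ ∧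
      Ton x₁ / (Ton x₁ + Toff x₁) < Ton x₂ / (Ton x₂ + Toff x₂) := by
  intro x₁ x₂ h1 h12 h2
  have hCR : 0 < C * R := mul_pos hC hR
  -- denominators positivity
  have hd1 : 0 < R * Q + θm - x₁ := by linarith
  have hd2 : 0 < R * Q + θm - x₂ := by linarith
  have hn1 : 0 < R * Q + θp - x₁ := by linarith
  have hn2 : 0 < R * Q + θp - x₂ := by linarith
  have he1 : 0 < x₁ - θp := by linarith
  have he2 : 0 < x₂ - θp := by linarith
  have hf1 : 0 < x₁ - θm := by linarith
  have hf2 : 0 < x₂ - θm := by linarith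
  -- ratios > 1
  have hr1 : 1 < (R * Q + θp - x₁) / (R * Q + θm - x₁) :=
    (one_lt_div hd1).mpr (by linarith)
  have hr2 : 1 < (R * Q + θp - x₂) / (R * Q + θm - x₂) :=
    (one_lt_div hd2).mpr (by linarith)
  have hs1 : 1 < (x₁ - θm) / (x₁ - θp) := (one_lt_div he1).mpr (by linarith)
  have hs2 : 1 < (x₂ - θm) / (x₂ - θp) := (one_lt_div he2).mpr (by linarith)
  -- Ton increasing
  have hrr : (R * Q + θp - x₁) / (R * Q + θm - x₁) <
      (R * Q + θp - x₂) / (R * Q + θm - x₂) := by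
    rw [div_lt_div_iff₀ hd1 hd2]; nlinarith
  have hTonlt : Ton x₁ < Ton x₂ := by
    rw [hTon x₁, hTon x₂]
    exact (mul_lt_mul_iff_right₀ hCR).mpr (Real.log_lt_log (by linarith) hrr)
  -- Toff decreasing
  have hss : (x₂ - θm) / (x₂ - θp) < (x₁ - θm) / (x₁ - θp) := by
    rw [div_lt_div_iff₀ he2 he1]; nlinarith
  have hTofflt : Toff x₂ < Toff x₁ := by
    rw [hToff x₁, hToff x₂]
    exact (mul_lt_mul_iff_right₀ hCR).mpr (Real.log_lt_log (by linarith) hss)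
  -- positivity of Ton, Toff
  have hTon1 : 0 < Ton x₁ := by
    rw [hTon x₁]; exact mul_pos hCR (Real.log_pos hr1)
  have hTon2 : 0 < Ton x₂ := by
    rw [hTon x₂]; exact mul_pos hCR (Real.log_pos hr2)
  have hToff1 : 0 < Toff x₁ := by
    rw [hToff x₁]; exact mul_pos hCR (Real.log_pos hs1)
  have hToff2 : 0 < Toff x₂ := by
    rw [hToff x₂]; exact mul_pos hCR (Real.log_pos hs2)
  refine ⟨hTonlt, hTofflt, ?_⟩
  rw [div_lt_div_iff₀ (by linarith) (by linarith)]
  nlinarith [mul_lt_mul_of_pos_right hTonlt hToff2,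
    mul_lt_mul_of_pos_left hTofflt hTon2]
end
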